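/- Let R = diag(e^{-4πi/5}, e^{3πi/5}), z₁ = e^{-2πi/5}, G₁ = diag(z₁, conj(z₁), conj(z₁), z₁), and CR(2π/5) = diag(1, 1, 1, e^{2πi/5}). Then (R⁻² ⊗ R⁻²) · G₁ = e^{4πi/5} · CR(2π/5). In particular, the controlled rotation gate CR(2π/5) is realized, up to a nonzero overall scalar, by composing the gate G₁ with the braid gate R⁻² on each qubit. -/
import Mathlib


open Matrix

/-- The Fibonacci R-matrix `R = diag(e^{-4πi/5}, e^{3πi/5})`. -/
noncomputable def R : Matrix (Fin 2) (Fin 2) ℂ :=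
  !![Complex.exp (-(4 * Real.pi * Complex.I) / 5), 0;
     0, Complex.exp (3 * Real.pi * Complex.I / 5)]

/-- `z₁ = e^{-2πi/5}`. -/
noncomputable def z₁ : ℂ := Complex.exp (-(2 * Real.pi * Complex.I) / 5)

/-- The entangling gate `G₁ = diag(z₁, conj z₁, conj z₁, z₁)`. -/
noncomputable def G₁ : Matrix (Fin 4) (Fin 4) ℂ :=
  Matrix.diagonal ![z₁, starRingEnd ℂ z₁, starRingEnd ℂ z₁, z₁]

/-- The controlled rotation gate `CR(2π/5) = diag(1, 1, 1, e^{2πi/5})`. -/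
noncomputable def CR : Matrix (Fin 4) (Fin 4) ℂ :=
  Matrix.diagonal ![1, 1, 1, Complex.exp (2 * Real.pi * Complex.I / 5)]

/-- Kronecker (tensor) product of matrices, reindexed to `Fin (m·p)` with the
row-major convention `(i, j) ↦ p·i + j`. -/
def kron {m n p q : ℕ} (A : Matrix (Fin m) (Fin n) ℂ) (B : Matrix (Fin p) (Fin q) ℂ) :
    Matrix (Fin (m * p)) (Fin (n * q)) ℂ :=
  Matrix.reindex finProdFinEquiv finProdFinEquiv (Matrix.kroneckerMap (· * ·) A B)


lemma kron_eq (A B : Matrix (Fin 2) (Fin 2) ℂ) :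
    kron A B =
      !![A 0 0 * B 0 0, A 0 0 * B 0 1, A 0 1 * B 0 0, A 0 1 * B 0 1;
         A 0 0 * B 1 0, A 0 0 * B 1 1, A 0 1 * B 1 0, A 0 1 * B 1 1;
         A 1 0 * B 0 0, A 1 0 * B 0 1, A 1 1 * B 0 0, A 1 1 * B 0 1;
         A 1 0 * B 1 0, A 1 0 * B 1 1, A 1 1 * B 1 0, A 1 1 * B 1 1] := by
  ext i j
  fin_cases i <;> fin_cases j <;> rfl

lemma Rinv : R⁻¹ = !![Complex.exp ((4 * Real.pi * Complex.I) / 5), 0;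
     0, Complex.exp (-(3 * Real.pi * Complex.I) / 5)] := by
  apply inv_eq_right_inv
  ext i j
  fin_cases i <;> fin_cases j <;>
    simp [R, Matrix.mul_apply, Fin.sum_univ_two, ← Complex.exp_add]
  · rw [show -(4 * (Real.pi:ℂ) * Complex.I) / 5 + 4 * Real.pi * Complex.I / 5 = 0 by ring,
      Complex.exp_zero]
  · rw [show (3:ℂ) * Real.pi * Complex.I / 5 + -(3 * Real.pi * Complex.I) / 5 = 0 by ring,
      Complex.exp_zero]

lemma conj_z₁ : starRingEnd ℂ z₁ = Complex.exp ((2 * Real.pi * Complex.I) / 5) := by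
  rw [z₁, ← Complex.exp_conj]
  congr 1
  simp [map_div₀, Complex.conj_I, map_ofNat]

lemma conj_z₁' : starRingEnd ℂ (Complex.exp (-(2 * Real.pi * Complex.I) / 5)) =
    Complex.exp ((2 * Real.pi * Complex.I) / 5) := by
  rw [← z₁, conj_z₁]

/-- `(R⁻² ⊗ R⁻²)·G₁ = e^{4πi/5}·CR(2π/5)`: the controlled rotation gate is
realized, up to a nonzero scalar, by composing `G₁` with `R⁻²` on each qubit. -/
theorem CR_realization :
    kron (R⁻¹ ^ 2) (R⁻¹ ^ 2) * G₁ =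
      Complex.exp (4 * Real.pi * Complex.I / 5) • CR := by
  rw [Rinv, kron_eq]
  ext i j
  fin_cases i <;> fin_cases j <;>
    simp [G₁, CR, conj_z₁, conj_z₁', z₁, Matrix.mul_apply, Fin.sum_univ_four, pow_two,
      Matrix.diagonal, ← Complex.exp_add]
  all_goals rw [Complex.exp_eq_exp_iff_exists_int]
  · exact ⟨1, by push_cast; ring⟩
  · exact ⟨0, by push_cast; ring⟩
  · exact ⟨0, by push_cast; ring⟩
  · exact ⟨-2, by push_cast; ring⟩
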